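/- For x ∈ D and v ∈ ℝ², with g(x) = (2x₂/(1+x₁), 2√(1-|x|²)/(1+x₁)), the differential of g at x satisfies |Dg_x(v)|² = 4((1-|x|²)|v|² + ⟨x,v⟩²)/((1+x₁)²(1-|x|²)). -/

import Mathlib

noncomputable section

/-- The Euclidean plane. -/
abbrev E2 := EuclideanSpace ℝ (Fin 2)

/-- The open unit disk. -/
def Dset : Set E2 := {x | ‖x‖ < 1}

/-- The upper half plane. -/
def Hset : Set E2 := {x | x 1 > 0}

/-- g(x) = (2x₂/(1+x₁), 2√(1-|x|²)/(1+x₁)). -/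
def gFH (x : E2) : E2 := WithLp.toLp 2 ![2 * x 1 / (1 + x 0), 2 * Real.sqrt (1 - ‖x‖ ^ 2) / (1 + x 0)]

/-!
Both components of `g` are quotients `2 f / (1 + x₁)`, so the quotient rule gives `Dg_x`
componentwise, with `D(√(1 - |x|²))_x v = -⟨x, v⟩ / √(1 - |x|²)`. After clearing denominators
the claimed identity is polynomial modulo `√(1 - |x|²)² = 1 - x₁² - x₂²`.
-/

theorem HasFDerivAt.fun_div {𝕜 E : Type*} [NontriviallyNormedField 𝕜] [NormedAddCommGroup E]
    [NormedSpace 𝕜 E] {c d : E → 𝕜} {c' d' : E →L[𝕜] 𝕜} {x : E}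
    (hc : HasFDerivAt c c' x) (hd : HasFDerivAt d d' x) (hx : d x ≠ 0) :
    HasFDerivAt (fun y => c y / d y) ((d x ^ 2)⁻¹ • (d x • c' - c x • d')) x := by
  simp only [div_eq_mul_inv]
  refine (hc.mul ((hasDerivAt_inv hx).comp_hasFDerivAt x hd)).congr_fderiv ?_
  ext v
  simp only [Function.comp_apply, add_apply, smul_apply, smul_eq_mul, neg_mul, mul_neg, sub_apply]
  field_simp
  ring

theorem hasFDerivAt_sqrt_one_sub_norm_sq {E : Type*} [NormedAddCommGroup E]
    [InnerProductSpace ℝ E] {x : E} (hx : ‖x‖ ≠ 1) :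
    HasFDerivAt (fun y : E => √(1 - ‖y‖ ^ 2)) (-(√(1 - ‖x‖ ^ 2))⁻¹ • innerSL ℝ x) x := by
  have hne : 1 - ‖x‖ ^ 2 ≠ 0 := by
    rwa [sub_ne_zero, ne_comm, Ne, pow_eq_one_iff_of_nonneg (norm_nonneg x) two_ne_zero]
  refine (((hasStrictFDerivAt_norm_sq x).hasFDerivAt.const_sub 1).sqrt hne).congr_fderiv ?_
  ext v
  simp only [one_div, mul_inv_rev, smul_neg, neg_apply, smul_apply, coe_innerSL_apply,
    nsmul_eq_mul, Nat.cast_ofNat, smul_eq_mul, neg_smul, neg_inj]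
  field_simp

theorem EuclideanSpace.norm_sq_fin_two (w : EuclideanSpace ℝ (Fin 2)) :
    ‖w‖ ^ 2 = w 0 ^ 2 + w 1 ^ 2 := by
  simp [EuclideanSpace.norm_sq_eq, Fin.sum_univ_two]

theorem EuclideanSpace.inner_fin_two (w u : EuclideanSpace ℝ (Fin 2)) :
    inner ℝ w u = w 0 * u 0 + w 1 * u 1 := by
  simp [PiLp.inner_apply, Fin.sum_univ_two, mul_comm]

theorem fderiv_toLp_pair_apply {E : Type*} [NormedAddCommGroup E] [NormedSpace ℝ E]
    {f₀ f₁ : E → ℝ} {f₀' f₁' : E →L[ℝ] ℝ} {x : E}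
    (h₀ : HasFDerivAt f₀ f₀' x) (h₁ : HasFDerivAt f₁ f₁' x) (v : E) :
    fderiv ℝ (fun y => WithLp.toLp 2 ![f₀ y, f₁ y]) x v = WithLp.toLp 2 ![f₀' v, f₁' v] := by
  have h : HasFDerivAt (fun y => ![f₀ y, f₁ y]) (ContinuousLinearMap.pi ![f₀', f₁']) x := by
    refine hasFDerivAt_pi'.2 fun i => ?_
    fin_cases i <;> simpa
  have hg : HasFDerivAt (fun y => WithLp.toLp 2 ![f₀ y, f₁ y])
      ((PiLp.continuousLinearEquiv 2 ℝ _).symm.toContinuousLinearMap ∘L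
        ContinuousLinearMap.pi ![f₀', f₁']) x :=
    (PiLp.hasFDerivAt_toLp 2 _).comp x h
  rw [hg.fderiv]
  ext i
  fin_cases i <;> rfl

theorem norm_fderiv_gFH_sq (x : E2) (hx : x ∈ Dset) (v : E2) :
    ‖fderiv ℝ gFH x v‖ ^ 2
      = 4 * ((1 - ‖x‖ ^ 2) * ‖v‖ ^ 2 + (inner ℝ x v : ℝ) ^ 2)
          / ((1 + x 0) ^ 2 * (1 - ‖x‖ ^ 2)) := by
  have hx1 : ‖x‖ < 1 := hx
  have hr : 0 < 1 - ‖x‖ ^ 2 := by nlinarith [norm_nonneg x]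
  have hden : 1 + x 0 ≠ 0 := by
    have := (Real.norm_eq_abs _ ▸ PiLp.norm_apply_le x 0).trans_lt hx1
    linarith [neg_abs_le (x 0)]
  have hd := (PiLp.hasFDerivAt_apply (𝕜 := ℝ) 2 x 0).const_add 1
  have h₀ := ((PiLp.hasFDerivAt_apply (𝕜 := ℝ) 2 x 1).const_mul 2).fun_div hd hden
  have h₁ := ((hasFDerivAt_sqrt_one_sub_norm_sq hx1.ne).const_mul 2).fun_div hd hden
  unfold gFH
  rw [fderiv_toLp_pair_apply h₀ h₁, EuclideanSpace.norm_sq_fin_two]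
  simp only [Matrix.cons_val_zero, Matrix.cons_val_one, smul_apply,
    sub_apply, PiLp.proj_apply, innerSL_apply_apply, smul_eq_mul]
  set r := √(1 - ‖x‖ ^ 2)
  have hr0 : r ≠ 0 := (Real.sqrt_pos.2 hr).ne'
  have hr2 : r ^ 2 = 1 - ‖x‖ ^ 2 := Real.sq_sqrt hr.le
  rw [← hr2, EuclideanSpace.norm_sq_fin_two v, EuclideanSpace.inner_fin_two]
  rw [EuclideanSpace.norm_sq_fin_two x] at hr2
  field_simp
  linear_combination 4 * r ^ 2 * v 0 ^ 2 * hr2
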